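/- arXiv:1907.08652 — 2 statements merged into one kernel-verified Lean document; each statement's English description precedes it below -/
import Mathlib

section
/- Let f : M → M be a hyperbolic homeomorphism with local product structure on a compact metric space (M,d), let A : M → GL(d,ℝ) be ν-Hölder continuous, α an automorphism of GL(d,ℝ), and suppose the α-twisted cocycle A_α is fiber-bunched. Then the stable holonomies H^{s,A,α}_{yz} = lim_{n→∞} α^{-n}(A_α^n(z)^{-1} A_α^n(y)) satisfy the equivariance relation H^{s,A,α}_{f^m(y) f^m(z)} = A_α^m(z) · α^m(H^{s,A,α}_{yz}) · A_α^m(y)^{-1} for every x ∈ M, all y, z ∈ W^s(x) and every m ∈ ℤ; the analogous relation holds for the unstable holonomies H^{u,A,α} when y, z ∈ W^u(x). -/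
open scoped Matrix.Norms.L2Operator

noncomputable section

/-- The `α`-twisted cocycle generated by `A` over `f`, at nonnegative times. -/
def twcN {M G : Type*} [Group G] (f : Equiv.Perm M) (α : MulAut G) (A : M → G) :
    ℕ → M → G
  | 0, _ => 1
  | n + 1, x => A ((f ^ n) x) * α (twcN f α A n x)

/-- The `α`-twisted cocycle generated by `A` over `f`, at all integer times. -/
def twc {M G : Type*} [Group G] (f : Equiv.Perm M) (α : MulAut G) (A : M → G) :
    ℤ → M → G
  | Int.ofNat n, x => twcN f α A n x
  | Int.negSucc n, x =>
      (α ^ (Int.negSucc n)) ((twcN f α A (n + 1) ((f ^ (Int.negSucc n)) x))⁻¹)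

/-- The local stable set `W^s_ε(x)`. -/
def localStable {M : Type*} [MetricSpace M] (f : Equiv.Perm M) (ε : ℝ) (x : M) :
    Set M :=
  {y | ∀ n : ℕ, dist ((f ^ n) x) ((f ^ n) y) ≤ ε}

/-- The local unstable set `W^u_ε(x)`. -/
def localUnstable {M : Type*} [MetricSpace M] (f : Equiv.Perm M) (ε : ℝ) (x : M) :
    Set M :=
  {y | ∀ n : ℕ, dist ((f⁻¹ ^ n) x) ((f⁻¹ ^ n) y) ≤ ε}

/-- The global stable set `W^s(x) = ⋃_{n ≥ 0} f^{-n}(W^s_ε(f^n(x)))`. -/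
def globalStable {M : Type*} [MetricSpace M] (f : Equiv.Perm M) (ε : ℝ) (x : M) :
    Set M :=
  {y | ∃ n : ℕ, (f ^ n) y ∈ localStable f ε ((f ^ n) x)}

/-- The global unstable set `W^u(x) = ⋃_{n ≥ 0} f^{n}(W^u_ε(f^{-n}(x)))`. -/
def globalUnstable {M : Type*} [MetricSpace M] (f : Equiv.Perm M) (ε : ℝ) (x : M) :
    Set M :=
  {y | ∃ n : ℕ, (f⁻¹ ^ n) y ∈ localUnstable f ε ((f⁻¹ ^ n) x)}

/-- `f` is a hyperbolic homeomorphism with local product structure, with constants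
`C, ε, λ, τ`. -/
structure IsHyperbolicLPS {M : Type*} [MetricSpace M] (f : M ≃ₜ M)
    (C ε lam τ : ℝ) : Prop where
  C_pos : 0 < C
  eps_pos : 0 < ε
  lam_pos : 0 < lam
  tau_pos : 0 < τ
  stable_contr : ∀ x y₁ y₂ : M, y₁ ∈ localStable f.toEquiv ε x →
    y₂ ∈ localStable f.toEquiv ε x → ∀ n : ℕ,
      dist ((f.toEquiv ^ n) y₁) ((f.toEquiv ^ n) y₂) ≤
        C * Real.exp (-lam * n) * dist y₁ y₂
  unstable_contr : ∀ x y₁ y₂ : M, y₁ ∈ localUnstable f.toEquiv ε x →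
    y₂ ∈ localUnstable f.toEquiv ε x → ∀ n : ℕ,
      dist ((f.toEquiv⁻¹ ^ n) y₁) ((f.toEquiv⁻¹ ^ n) y₂) ≤
        C * Real.exp (-lam * n) * dist y₁ y₂
  bracket : ∃ br : {p : M × M // dist p.1 p.2 ≤ τ} → M, Continuous br ∧
    ∀ p : {p : M × M // dist p.1 p.2 ≤ τ},
      localStable f.toEquiv ε p.1.1 ∩ localUnstable f.toEquiv ε p.1.2 = {br p}

/-- `A` is `ν`-Hölder continuous (w.r.t. the operator norm on matrices). -/
def IsHolder {M : Type*} [MetricSpace M] {d : ℕ} (ν : ℝ)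
    (A : M → GL (Fin d) ℝ) : Prop :=
  ∃ C > 0, ∀ x y : M,
    ‖(A x : Matrix (Fin d) (Fin d) ℝ) - (A y : Matrix (Fin d) (Fin d) ℝ)‖ ≤
      C * dist x y ^ ν

/-- The fiber-bunching inequalities (i), (ii), (iii) with constants `ρ, θ`. -/
def FiberBunchedWith {M : Type*} [MetricSpace M] {d : ℕ} (f : Equiv.Perm M)
    (α : MulAut (GL (Fin d) ℝ)) (A : M → GL (Fin d) ℝ) (ρ θ : ℝ) : Prop :=
  ∃ C > 0,
    (∀ (n : ℤ) (x : M),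
      ‖(((α ^ (-n)) (twc f α A n x) : GL (Fin d) ℝ) : Matrix (Fin d) (Fin d) ℝ)‖ *
        ‖(((α ^ (-n)) ((twc f α A n x)⁻¹) : GL (Fin d) ℝ) : Matrix (Fin d) (Fin d) ℝ)‖ <
        C * Real.exp (θ * |(n : ℝ)|)) ∧
    (∀ (n : ℤ) (T₁ T₂ : GL (Fin d) ℝ),
      ‖(((α ^ n) T₁ : GL (Fin d) ℝ) : Matrix (Fin d) (Fin d) ℝ) -
          (((α ^ n) T₂ : GL (Fin d) ℝ) : Matrix (Fin d) (Fin d) ℝ)‖ ≤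
        C * Real.exp (ρ * |(n : ℝ)|) *
          ‖(T₁ : Matrix (Fin d) (Fin d) ℝ) - (T₂ : Matrix (Fin d) (Fin d) ℝ)‖) ∧
    (∀ (n : ℤ) (T : GL (Fin d) ℝ),
      ‖(((α ^ n) T : GL (Fin d) ℝ) : Matrix (Fin d) (Fin d) ℝ)‖ ≤
        C * Real.exp (ρ * |(n : ℝ)|) * ‖(T : Matrix (Fin d) (Fin d) ℝ)‖)

/-- The twisted cocycle generated by `A` is fiber-bunched. -/
def FiberBunched {M : Type*} [MetricSpace M] {d : ℕ} (f : Equiv.Perm M)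
    (α : MulAut (GL (Fin d) ℝ)) (A : M → GL (Fin d) ℝ) (ν lam : ℝ) : Prop :=
  ∃ ρ θ : ℝ, 0 < ρ ∧ 0 < θ ∧ 5 * ρ + 2 * θ < ν * lam ∧ FiberBunchedWith f α A ρ θ

/-- `H` is the stable holonomy `H^{s,A,α}_{a b}`. -/
def IsStableHol {M : Type*} [MetricSpace M] {d : ℕ} (f : Equiv.Perm M)
    (α : MulAut (GL (Fin d) ℝ)) (A : M → GL (Fin d) ℝ) (a b : M)
    (H : GL (Fin d) ℝ) : Prop :=
  Filter.Tendsto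
    (fun n : ℕ =>
      (((α ^ (-(n : ℤ))) ((twc f α A n b)⁻¹ * twc f α A n a) : GL (Fin d) ℝ) :
        Matrix (Fin d) (Fin d) ℝ))
    Filter.atTop (nhds (H : Matrix (Fin d) (Fin d) ℝ))

/-- `H` is the unstable holonomy `H^{u,A,α}_{a b}`. -/
def IsUnstableHol {M : Type*} [MetricSpace M] {d : ℕ} (f : Equiv.Perm M)
    (α : MulAut (GL (Fin d) ℝ)) (A : M → GL (Fin d) ℝ) (a b : M)
    (H : GL (Fin d) ℝ) : Prop :=
  Filter.Tendsto
    (fun n : ℕ =>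
      (((α ^ (n : ℤ)) ((twc f α A (-(n : ℤ)) b)⁻¹ * twc f α A (-(n : ℤ)) a) :
          GL (Fin d) ℝ) : Matrix (Fin d) (Fin d) ℝ))
    Filter.atTop (nhds (H : Matrix (Fin d) (Fin d) ℝ))

end

/-!
Shifting time by `m`, the cocycle identity `A_α^{n+m}(w) = A_α^n(f^m w) · α^n(A_α^m(w))` turns the
`n`-th approximant `α^{-n}(A_α^n(f^m z)⁻¹ A_α^n(f^m y))` of `H_{f^m y, f^m z}` into
`A_α^m(z) · α^m(H_{n+m}) · A_α^m(y)⁻¹`, where `H_{n+m}` is the `(n+m)`-th approximant of `H_{yz}`.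
By fiber bunching (ii) the automorphism `α^m` is Lipschitz for the operator norm, so both sides
converge and the limits agree.
-/

open Filter Topology

lemma MulAut.zpow_apply_zpow_apply {G : Type*} [Group G] (α : MulAut G) (a b : ℤ) (g : G) :
    (α ^ a) ((α ^ b) g) = (α ^ (a + b)) g := by
  rw [zpow_add, MulAut.mul_apply]

lemma eq_of_forall_add_one {G : Type*} [Group G] (φ : G → G) (hφ : Function.Injective φ)
    (B : ℤ → G) {u v : ℤ → G} (hu : ∀ k, u (k + 1) = B k * φ (u k))
    (hv : ∀ k, v (k + 1) = B k * φ (v k)) (h0 : u 0 = v 0) : u = v := by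
  funext k
  induction k using Int.induction_on with
  | zero => exact h0
  | succ k ih => rw [hu, hv, ih]
  | pred k ih =>
    apply hφ
    apply mul_left_cancel (a := B (-k - 1))
    rw [← hu, ← hv, sub_add_cancel, ih]

section TwistedCocycle

variable {M G : Type*} [Group G] (f : Equiv.Perm M) (α : MulAut G) (A : M → G)

lemma twcN_succ' (n : ℕ) (x : M) :
    twcN f α A (n + 1) x = twcN f α A n (f x) * (α ^ n) (A x) := by
  induction n generalizing x with
  | zero => simp [twcN]
  | succ n ih =>
    rw [twcN, ih, twcN, map_mul, ← mul_assoc, pow_succ' α, MulAut.mul_apply, pow_succ f,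
      Equiv.Perm.mul_apply]

lemma twc_natCast (n : ℕ) (x : M) : twc f α A n x = twcN f α A n x := rfl

lemma twc_neg_natCast (n : ℕ) (x : M) :
    twc f α A (-n) x = (α ^ (-(n : ℤ))) (twcN f α A n ((f ^ (-(n : ℤ))) x))⁻¹ := by
  cases n with
  | zero => simp [twc, twcN]
  | succ n => rfl

lemma twc_add_one (n : ℤ) (x : M) :
    twc f α A (n + 1) x = A ((f ^ n) x) * α (twc f α A n x) := by
  obtain ⟨n, rfl | rfl⟩ := Int.eq_nat_or_neg n
  · rw [← Nat.cast_succ, twc_natCast, twc_natCast, twcN, zpow_natCast]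
  cases n with
  | zero => simp [twc, twcN]
  | succ k =>
    set y := (f ^ (-((k + 1 : ℕ) : ℤ))) x
    have hy : (f ^ (-(k : ℤ))) x = f y := by
      rw [← Equiv.Perm.mul_apply, ← zpow_one_add]; push_cast; ring_nf
    have hα : ∀ g, α ((α ^ (-((k + 1 : ℕ) : ℤ))) g) = (α ^ (-(k : ℤ))) g := by
      intro g; rw [← MulAut.mul_apply, ← zpow_one_add]; push_cast; ring_nf
    rw [show -((k + 1 : ℕ) : ℤ) + 1 = -(k : ℤ) by push_cast; ring, twc_neg_natCast,
      twc_neg_natCast, twcN_succ', hy, mul_inv_rev, map_mul, map_mul, hα, hα]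
    simp only [map_inv]
    rw [← zpow_natCast α k, MulAut.zpow_apply_zpow_apply, neg_add_cancel, zpow_zero,
      MulAut.one_apply, mul_inv_cancel_left]

lemma twc_add (k l : ℤ) (x : M) :
    twc f α A (k + l) x = twc f α A k ((f ^ l) x) * (α ^ k) (twc f α A l x) := by
  have hrec := eq_of_forall_add_one α α.injective (fun k => A ((f ^ (k + l)) x))
    (u := fun k => twc f α A (k + l) x)
    (v := fun k => twc f α A k ((f ^ l) x) * (α ^ k) (twc f α A l x))
    (fun k => by rw [add_right_comm, twc_add_one])
    (fun k => by
      rw [twc_add_one, map_mul, ← mul_assoc, zpow_add f, Equiv.Perm.mul_apply, add_comm k 1,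
        zpow_one_add, MulAut.mul_apply])
    (by simp [twc, twcN])
  exact congrFun hrec k

def holonomyApprox (n : ℤ) (a b : M) : G :=
  (α ^ (-n)) ((twc f α A n b)⁻¹ * twc f α A n a)

lemma holonomyApprox_zpow_apply (n m : ℤ) (a b : M) :
    holonomyApprox f α A n ((f ^ m) a) ((f ^ m) b) =
      twc f α A m b * (α ^ m) (holonomyApprox f α A (n + m) a b) * (twc f α A m a)⁻¹ := by
  have hshift : ∀ w, twc f α A n ((f ^ m) w) =
      twc f α A (n + m) w * ((α ^ n) (twc f α A m w))⁻¹ := by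
    intro w; rw [twc_add]; group
  simp only [holonomyApprox, hshift, mul_inv_rev, inv_inv, map_mul, map_inv,
    MulAut.zpow_apply_zpow_apply, neg_add_cancel, zpow_zero, MulAut.one_apply, mul_assoc]
  rw [show m + -(n + m) = -n by ring]

end TwistedCocycle

lemma tendsto_val_map_of_norm_sub_le {R ι : Type*} [NormedRing R] {l : Filter ι}
    (φ : Rˣ → Rˣ) (K : ℝ) (hφ : ∀ T₁ T₂, ‖(φ T₁ : R) - φ T₂‖ ≤ K * ‖(T₁ : R) - T₂‖)
    {g : ι → Rˣ} {T : Rˣ} (hg : Tendsto (fun i => (g i : R)) l (𝓝 T)) :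
    Tendsto (fun i => (φ (g i) : R)) l (𝓝 (φ T)) := by
  rw [tendsto_iff_norm_sub_tendsto_zero] at hg ⊢
  refine squeeze_zero (fun i => norm_nonneg _) (fun i => hφ (g i) T) ?_
  simpa using hg.const_mul K

lemma eq_of_tendsto_holonomyApprox {M R : Type*} [NormedRing R] (f : Equiv.Perm M)
    (α : MulAut Rˣ) (A : M → Rˣ) {l : Filter ℤ} [l.NeBot] {m : ℤ}
    (hl : Tendsto (· + m) l l) {K : ℝ}
    (hαm : ∀ T₁ T₂, ‖((α ^ m) T₁ : R) - (α ^ m) T₂‖ ≤ K * ‖(T₁ : R) - T₂‖)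
    {a b : M} {H H' : Rˣ}
    (hH : Tendsto (fun n => ((holonomyApprox f α A n a b : Rˣ) : R)) l (𝓝 H))
    (hH' : Tendsto (fun n => ((holonomyApprox f α A n ((f ^ m) a) ((f ^ m) b) : Rˣ) : R)) l
      (𝓝 H')) :
    H' = twc f α A m b * (α ^ m) H * (twc f α A m a)⁻¹ := by
  have hlim := ((tendsto_val_map_of_norm_sub_le (α ^ m) K hαm (hH.comp hl)).const_mul
    ((twc f α A m b : Rˣ) : R)).mul_const (((twc f α A m a)⁻¹ : Rˣ) : R)
  refine Units.ext (tendsto_nhds_unique ?_ hlim)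
  simpa only [holonomyApprox_zpow_apply, Units.val_mul] using hH'

section Holonomy

variable {M : Type*} [MetricSpace M] {d : ℕ} (f : Equiv.Perm M) (α : MulAut (GL (Fin d) ℝ))
  (A : M → GL (Fin d) ℝ) (a b : M) (H : GL (Fin d) ℝ)

lemma isStableHol_iff : IsStableHol f α A a b H ↔
    Tendsto (fun n => ((holonomyApprox f α A n a b : GL (Fin d) ℝ) : Matrix (Fin d) (Fin d) ℝ))
      atTop (𝓝 H) := by
  rw [← Nat.map_cast_int_atTop, tendsto_map'_iff]
  rfl

lemma isUnstableHol_iff : IsUnstableHol f α A a b H ↔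
    Tendsto (fun n => ((holonomyApprox f α A n a b : GL (Fin d) ℝ) : Matrix (Fin d) (Fin d) ℝ))
      atBot (𝓝 H) := by
  rw [← map_neg_atTop, ← Nat.map_cast_int_atTop, map_map, tendsto_map'_iff]
  simp only [IsUnstableHol, holonomyApprox, Function.comp_def, neg_neg]

end Holonomy

theorem holonomies_equivariance_general {M : Type*} [MetricSpace M] {d : ℕ}
    (f : M ≃ₜ M) (ε lam ν : ℝ)
    (A : M → GL (Fin d) ℝ) (α : MulAut (GL (Fin d) ℝ))
    (hFA : FiberBunched f.toEquiv α A ν lam) :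
    (∀ x : M, ∀ y ∈ globalStable f.toEquiv ε x, ∀ z ∈ globalStable f.toEquiv ε x,
      ∀ (m : ℤ) (H H' : GL (Fin d) ℝ),
        IsStableHol f.toEquiv α A y z H →
          IsStableHol f.toEquiv α A ((f.toEquiv ^ m) y) ((f.toEquiv ^ m) z) H' →
            H' = twc f.toEquiv α A m z * (α ^ m) H * (twc f.toEquiv α A m y)⁻¹) ∧
    (∀ x : M, ∀ y ∈ globalUnstable f.toEquiv ε x, ∀ z ∈ globalUnstable f.toEquiv ε x,
      ∀ (m : ℤ) (H H' : GL (Fin d) ℝ),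
        IsUnstableHol f.toEquiv α A y z H →
          IsUnstableHol f.toEquiv α A ((f.toEquiv ^ m) y) ((f.toEquiv ^ m) z) H' →
            H' = twc f.toEquiv α A m z * (α ^ m) H * (twc f.toEquiv α A m y)⁻¹) := by
  obtain ⟨_, _, -, -, -, _, -, -, hαLip, -⟩ := hFA
  refine ⟨fun _ y _ z _ m H H' hH hH' => ?_, fun _ y _ z _ m H H' hH hH' => ?_⟩
  · exact eq_of_tendsto_holonomyApprox f.toEquiv α A
      (tendsto_atTop_add_const_right _ m tendsto_id) (hαLip m)
      ((isStableHol_iff ..).1 hH) ((isStableHol_iff ..).1 hH')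
  · exact eq_of_tendsto_holonomyApprox f.toEquiv α A
      (tendsto_atBot_add_const_right _ m tendsto_id) (hαLip m)
      ((isUnstableHol_iff ..).1 hH) ((isUnstableHol_iff ..).1 hH')

/-- **Equivariance of holonomies.**
`H^{s,A,α}_{f^m(y) f^m(z)} = A_α^m(z) · α^m(H^{s,A,α}_{yz}) · A_α^m(y)⁻¹` for all
`y, z ∈ W^s(x)` and `m ∈ ℤ`, and analogously for the unstable holonomies on `W^u(x)`. -/
theorem holonomies_equivariance {M : Type*} [MetricSpace M] [CompactSpace M] {d : ℕ}
    (f : M ≃ₜ M) (C ε lam τ ν : ℝ) (hν : 0 < ν)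
    (hf : IsHyperbolicLPS f C ε lam τ)
    (A : M → GL (Fin d) ℝ) (α : MulAut (GL (Fin d) ℝ))
    (hA : IsHolder ν A) (hFA : FiberBunched f.toEquiv α A ν lam) :
    (∀ x : M, ∀ y ∈ globalStable f.toEquiv ε x, ∀ z ∈ globalStable f.toEquiv ε x,
      ∀ (m : ℤ) (H H' : GL (Fin d) ℝ),
        IsStableHol f.toEquiv α A y z H →
          IsStableHol f.toEquiv α A ((f.toEquiv ^ m) y) ((f.toEquiv ^ m) z) H' →
            H' = twc f.toEquiv α A m z * (α ^ m) H * (twc f.toEquiv α A m y)⁻¹) ∧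
    (∀ x : M, ∀ y ∈ globalUnstable f.toEquiv ε x, ∀ z ∈ globalUnstable f.toEquiv ε x,
      ∀ (m : ℤ) (H H' : GL (Fin d) ℝ),
        IsUnstableHol f.toEquiv α A y z H →
          IsUnstableHol f.toEquiv α A ((f.toEquiv ^ m) y) ((f.toEquiv ^ m) z) H' →
            H' = twc f.toEquiv α A m z * (α ^ m) H * (twc f.toEquiv α A m y)⁻¹) :=
  holonomies_equivariance_general f ε lam ν A α hFA
end

section
/- Let f : M → M be a hyperbolic homeomorphism with local product structure on a compact metric space (M,d), let A : M → GL(d,ℝ) be ν-Hölder continuous, α an automorphism of GL(d,ℝ), suppose the α-twisted cocycle A_α is fiber-bunched with constants ρ, θ, and let δ > 0 satisfy 5ρ + 2θ + δ < λν. Fix x ∈ M. Then there exists a family of norms (‖·‖_k)_{k∈ℕ} on ℝ^d, with ‖v‖ ≤ ‖v‖_k ≤ C e^{2ρk} ‖v‖ for a constant C depending only on A, α, f, δ, such that for every k ≥ 1 the matrix T_k := α^{-k}(A(f^{k-1}(x))) satisfies (sup_{v≠0} ‖T_k v‖_k / ‖v‖_{k-1}) · (sup_{v≠0} ‖T_k^{-1}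 v‖_{k-1} / ‖v‖_k) ≤ e^{2θ + δ}. -/
/-!
Write `P_k = α^{-k}(A_α^k(x))`, so that `P_{k+1} = T_k P_k`. Fiber bunching (i) and (iii) bound
the distortion `‖P_k P_j⁻¹‖ ‖P_j P_k⁻¹‖` by `K e^{2ρk + θ|k-j|}`. With `a = θ + δ/2` put
`‖v‖_k = sup_j e^{-a|k-j|} (‖P_k‖ / ‖P_j‖) ‖P_j P_k⁻¹ v‖`. The term `j = k` is `‖v‖`, and the
distortion bound caps every term by `K e^{2ρk} ‖v‖` since `a ≥ θ`. Moving from `k` to `k + 1`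
changes each weight `e^{-a|k-j|}` by a factor at most `e^a`, so
`‖T_k v‖_{k+1} ≤ e^a (‖P_{k+1}‖ / ‖P_k‖) ‖v‖_k` and
`‖T_k⁻¹ w‖_k ≤ e^a (‖P_k‖ / ‖P_{k+1}‖) ‖w‖_{k+1}`; the ratios of norms of `P` cancel in the
product, leaving `e^{2a} = e^{2θ+δ}`.
-/

open scoped Matrix.Norms.L2Operator

section TwistedCocycle

variable {M G : Type*} [Group G] (f : Equiv.Perm M) (α : MulAut G) (A : M → G)

theorem twcN_add (x : M) (j : ℕ) :
    ∀ m : ℕ, twcN f α A (m + j) x = twcN f α A m ((f ^ j) x) * (α ^ m) (twcN f α A j x)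
  | 0 => by simp [twcN]
  | m + 1 => by
    rw [Nat.add_right_comm, twcN, twcN, twcN_add x j m, map_mul, ← mul_assoc, pow_add,
      Equiv.Perm.mul_apply, pow_succ', MulAut.mul_apply]

def untwistedCocycle (x : M) (k : ℕ) : G := (α ^ (-(k : ℤ))) (twcN f α A k x)

theorem MulAut.zpow_apply_zpow_apply_s9 (m n : ℤ) (g : G) :
    (α ^ m) ((α ^ n) g) = (α ^ (m + n)) g := by
  rw [zpow_add, MulAut.mul_apply]

theorem untwistedCocycle_succ (x : M) (k : ℕ) :
    untwistedCocycle f α A x (k + 1) =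
      (α ^ (-(k + 1 : ℤ))) (A ((f ^ k) x)) * untwistedCocycle f α A x k := by
  have shift : (α ^ (-(k + 1 : ℤ))) (α (twcN f α A k x)) =
      (α ^ (-(k : ℤ))) (twcN f α A k x) := by
    rw [← MulAut.mul_apply, ← zpow_add_one, neg_add, neg_add_cancel_right]
  rw [untwistedCocycle, untwistedCocycle, twcN, map_mul, ← shift]
  push_cast
  rfl

theorem untwistedCocycle_add_mul_inv (x : M) (j m : ℕ) :
    untwistedCocycle f α A x (m + j) * (untwistedCocycle f α A x j)⁻¹ =
      (α ^ (-(j : ℤ))) (untwistedCocycle f α A ((f ^ j) x) m) := by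
  rw [untwistedCocycle, untwistedCocycle, untwistedCocycle, twcN_add, map_mul, mul_assoc,
    ← zpow_natCast α m, MulAut.zpow_apply_zpow_apply_s9, MulAut.zpow_apply_zpow_apply_s9,
    mul_inv_eq_one.mpr (by push_cast; ring_nf), mul_one]
  push_cast
  ring_nf

end TwistedCocycle

section FiberBunching

variable {M R : Type*} [SeminormedRing R] (f : Equiv.Perm M) (α : MulAut Rˣ) (A : M → Rˣ)
  {K ρ θ : ℝ}

theorem norm_untwistedCocycle_add_mul_inv_mul_le (hK : 0 ≤ K)
    (hbunch : ∀ (m : ℕ) (y : M), ‖((untwistedCocycle f α A y m : Rˣ) : R)‖ *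
      ‖(((untwistedCocycle f α A y m)⁻¹ : Rˣ) : R)‖ ≤ K * Real.exp (θ * m))
    (hα : ∀ (j : ℕ) (T : Rˣ), ‖((α ^ (-(j : ℤ))) T : R)‖ ≤ K * Real.exp (ρ * j) * ‖(T : R)‖)
    (x : M) (j m : ℕ) :
    ‖((untwistedCocycle f α A x (m + j) * (untwistedCocycle f α A x j)⁻¹ : Rˣ) : R)‖ *
      ‖((untwistedCocycle f α A x j * (untwistedCocycle f α A x (m + j))⁻¹ : Rˣ) : R)‖ ≤
      K ^ 3 * Real.exp (2 * ρ * j + θ * m) := by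
  set B := untwistedCocycle f α A ((f ^ j) x) m
  have hinv : untwistedCocycle f α A x j * (untwistedCocycle f α A x (m + j))⁻¹ =
      (α ^ (-(j : ℤ))) B⁻¹ := by
    rw [map_inv, ← untwistedCocycle_add_mul_inv, mul_inv_rev, inv_inv]
  rw [untwistedCocycle_add_mul_inv, hinv]
  have hexp : Real.exp (2 * ρ * j + θ * m) =
      Real.exp (ρ * j) * Real.exp (ρ * j) * Real.exp (θ * m) := by
    rw [← Real.exp_add, ← Real.exp_add]; ring_nf
  calc ‖((α ^ (-(j : ℤ))) B : R)‖ * ‖((α ^ (-(j : ℤ))) B⁻¹ : R)‖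
      ≤ (K * Real.exp (ρ * j) * ‖(B : R)‖) * (K * Real.exp (ρ * j) * ‖((B⁻¹ : Rˣ) : R)‖) :=
        mul_le_mul (hα j B) (hα j B⁻¹) (norm_nonneg _) (by positivity)
    _ = K ^ 2 * Real.exp (ρ * j) * Real.exp (ρ * j) * (‖(B : R)‖ * ‖((B⁻¹ : Rˣ) : R)‖) := by
        ring
    _ ≤ K ^ 2 * Real.exp (ρ * j) * Real.exp (ρ * j) * (K * Real.exp (θ * m)) := by
        gcongr ?_ * ?_
        exact hbunch m _
    _ = K ^ 3 * Real.exp (2 * ρ * j + θ * m) := by rw [hexp]; ring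

theorem norm_untwistedCocycle_mul_inv_mul_le (hK : 0 ≤ K) (hρ : 0 ≤ ρ)
    (hbunch : ∀ (m : ℕ) (y : M), ‖((untwistedCocycle f α A y m : Rˣ) : R)‖ *
      ‖(((untwistedCocycle f α A y m)⁻¹ : Rˣ) : R)‖ ≤ K * Real.exp (θ * m))
    (hα : ∀ (j : ℕ) (T : Rˣ), ‖((α ^ (-(j : ℤ))) T : R)‖ ≤ K * Real.exp (ρ * j) * ‖(T : R)‖)
    (x : M) (j k : ℕ) :
    ‖((untwistedCocycle f α A x k * (untwistedCocycle f α A x j)⁻¹ : Rˣ) : R)‖ *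
      ‖((untwistedCocycle f α A x j * (untwistedCocycle f α A x k)⁻¹ : Rˣ) : R)‖ ≤
      K ^ 3 * Real.exp (2 * ρ * k + θ * |(k : ℝ) - j|) := by
  rcases le_total j k with hjk | hkj
  · obtain ⟨m, rfl⟩ := Nat.exists_eq_add_of_le' hjk
    refine (norm_untwistedCocycle_add_mul_inv_mul_le f α A hK hbunch hα x j m).trans ?_
    push_cast
    rw [add_sub_cancel_right, abs_of_nonneg (Nat.cast_nonneg _)]
    gcongr
    linarith [mul_nonneg hρ (Nat.cast_nonneg (α := ℝ) m)]
  · obtain ⟨m, rfl⟩ := Nat.exists_eq_add_of_le' hkj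
    rw [mul_comm]
    refine (norm_untwistedCocycle_add_mul_inv_mul_le f α A hK hbunch hα x k m).trans_eq ?_
    push_cast
    rw [sub_add_cancel_right, abs_neg, abs_of_nonneg (Nat.cast_nonneg _)]

end FiberBunching

noncomputable section AdaptedNorm

variable {E : Type*} [NormedAddCommGroup E] [NormedSpace ℝ E] (Q : ℕ → (E →L[ℝ] E)ˣ) (a : ℝ)

def orbitWeight (k j : ℕ) : ℝ := Real.exp (-(a * |(k : ℝ) - j|)) / ‖(Q j : E →L[ℝ] E)‖

def weightedOrbitSup (k : ℕ) : Seminorm ℝ E :=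
  ⨆ j : ℕ, (orbitWeight Q a k j).toNNReal • (normSeminorm ℝ E).comp (Q j : E →L[ℝ] E).toLinearMap

/-- `adaptedNorm Q a k v = sup_j e^{-a|k-j|} (‖Q_k‖ / ‖Q_j‖) ‖Q_j Q_k⁻¹ v‖`; factoring it through
`Q_k⁻¹` keeps the supremum bounded, by `‖Q_k‖ ‖Q_k⁻¹ v‖`, without any hypothesis on `Q`. -/
def adaptedNorm (k : ℕ) : Seminorm ℝ E :=
  ‖(Q k : E →L[ℝ] E)‖.toNNReal •
    (weightedOrbitSup Q a k).comp (↑(Q k)⁻¹ : E →L[ℝ] E).toLinearMap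

variable {a}

theorem orbitWeight_nonneg (k j : ℕ) : 0 ≤ orbitWeight Q a k j := by
  unfold orbitWeight; positivity

theorem orbitWeight_mul_norm_le (ha : 0 ≤ a) (k j : ℕ) (u : E) :
    orbitWeight Q a k j * ‖(Q j : E →L[ℝ] E) u‖ ≤ ‖u‖ := by
  have hexp : Real.exp (-(a * |(k : ℝ) - j|)) ≤ 1 :=
    Real.exp_le_one_iff.mpr (neg_nonpos.mpr (by positivity))
  calc orbitWeight Q a k j * ‖(Q j : E →L[ℝ] E) u‖
      ≤ orbitWeight Q a k j * (‖(Q j : E →L[ℝ] E)‖ * ‖u‖) :=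
        mul_le_mul_of_nonneg_left ((Q j : E →L[ℝ] E).le_opNorm u) (orbitWeight_nonneg Q k j)
    _ = Real.exp (-(a * |(k : ℝ) - j|)) * (‖(Q j : E →L[ℝ] E)‖ / ‖(Q j : E →L[ℝ] E)‖) * ‖u‖ := by
        rw [orbitWeight]; ring
    _ ≤ 1 * 1 * ‖u‖ := by gcongr; exact div_self_le_one _
    _ = ‖u‖ := by ring

theorem orbitWeight_le_exp_mul (ha : 0 ≤ a) (k l j : ℕ) :
    orbitWeight Q a l j ≤ Real.exp (a * |(l : ℝ) - k|) * orbitWeight Q a k j := by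
  have htri := mul_le_mul_of_nonneg_left (abs_sub_le (k : ℝ) l j) ha
  rw [mul_add, abs_sub_comm (k : ℝ) l] at htri
  rw [orbitWeight, orbitWeight, mul_div_assoc', ← Real.exp_add]
  gcongr
  linarith

theorem weightedOrbitSup_apply (ha : 0 ≤ a) (k : ℕ) (u : E) :
    weightedOrbitSup Q a k u = ⨆ j : ℕ, orbitWeight Q a k j * ‖(Q j : E →L[ℝ] E) u‖ := by
  have hterm : ∀ (j : ℕ) (u : E), ((orbitWeight Q a k j).toNNReal •
      (normSeminorm ℝ E).comp (Q j : E →L[ℝ] E).toLinearMap) u =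
        orbitWeight Q a k j * ‖(Q j : E →L[ℝ] E) u‖ := fun j u => by
    rw [smul_apply, NNReal.smul_def, Real.coe_toNNReal _ (orbitWeight_nonneg Q k j)]
    rfl
  rw [weightedOrbitSup, Seminorm.iSup_apply]
  · simp only [hterm]
  · refine Seminorm.bddAbove_range_iff.mpr fun u => ⟨‖u‖, ?_⟩
    rintro _ ⟨j, rfl⟩
    simpa only [hterm] using orbitWeight_mul_norm_le Q ha k j u

theorem le_weightedOrbitSup (ha : 0 ≤ a) (k j : ℕ) (u : E) :
    orbitWeight Q a k j * ‖(Q j : E →L[ℝ] E) u‖ ≤ weightedOrbitSup Q a k u := by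
  rw [weightedOrbitSup_apply Q ha]
  exact le_ciSup (f := fun j => orbitWeight Q a k j * ‖(Q j : E →L[ℝ] E) u‖)
    ⟨‖u‖, by rintro _ ⟨i, rfl⟩; exact orbitWeight_mul_norm_le Q ha k i u⟩ j

theorem weightedOrbitSup_le (ha : 0 ≤ a) {k : ℕ} {u : E} {c : ℝ}
    (hc : ∀ j : ℕ, orbitWeight Q a k j * ‖(Q j : E →L[ℝ] E) u‖ ≤ c) :
    weightedOrbitSup Q a k u ≤ c := by
  rw [weightedOrbitSup_apply Q ha]
  exact ciSup_le hc

theorem weightedOrbitSup_le_exp_mul (ha : 0 ≤ a) (k l : ℕ) (u : E) :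
    weightedOrbitSup Q a l u ≤ Real.exp (a * |(l : ℝ) - k|) * weightedOrbitSup Q a k u := by
  refine weightedOrbitSup_le Q ha fun j => ?_
  calc orbitWeight Q a l j * ‖(Q j : E →L[ℝ] E) u‖
      ≤ Real.exp (a * |(l : ℝ) - k|) * orbitWeight Q a k j * ‖(Q j : E →L[ℝ] E) u‖ := by
        gcongr; exact orbitWeight_le_exp_mul Q ha k l j
    _ ≤ Real.exp (a * |(l : ℝ) - k|) * weightedOrbitSup Q a k u := by
        rw [mul_assoc]; gcongr; exact le_weightedOrbitSup Q ha k j u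

theorem adaptedNorm_apply (k : ℕ) (v : E) :
    adaptedNorm Q a k v =
      ‖(Q k : E →L[ℝ] E)‖ * weightedOrbitSup Q a k ((↑(Q k)⁻¹ : E →L[ℝ] E) v) := by
  rw [adaptedNorm, smul_apply, NNReal.smul_def, Real.coe_toNNReal _ (norm_nonneg _)]
  rfl

theorem norm_le_adaptedNorm (ha : 0 ≤ a) (k : ℕ) (v : E) : ‖v‖ ≤ adaptedNorm Q a k v := by
  rcases subsingleton_or_nontrivial E with hE | hE
  · simp [Subsingleton.elim v 0]
  have hdiag := le_weightedOrbitSup Q ha k k ((↑(Q k)⁻¹ : E →L[ℝ] E) v)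
  rw [orbitWeight, sub_self, abs_zero, mul_zero, neg_zero, Real.exp_zero, ← mul_apply_eq_comp,
    Units.mul_inv, one_apply_eq_self, one_div_mul_eq_div, div_le_iff₀' (Units.norm_pos (Q k))]
    at hdiag
  rwa [adaptedNorm_apply]

theorem adaptedNorm_le (ha : 0 ≤ a) {k : ℕ} {D : ℝ}
    (hD : ∀ j : ℕ, ‖(↑(Q k * (Q j)⁻¹) : E →L[ℝ] E)‖ * ‖(↑(Q j * (Q k)⁻¹) : E →L[ℝ] E)‖ ≤
      D * Real.exp (a * |(k : ℝ) - j|))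
    (v : E) : adaptedNorm Q a k v ≤ D * ‖v‖ := by
  rcases subsingleton_or_nontrivial E with hE | hE
  · simp [Subsingleton.elim v 0]
  have hQk := Units.norm_pos (Q k)
  rw [adaptedNorm_apply, ← le_div_iff₀' hQk]
  refine weightedOrbitSup_le Q ha fun j => ?_
  have hQj := Units.norm_pos (Q j)
  have hmap : ‖(Q j : E →L[ℝ] E) ((↑(Q k)⁻¹ : E →L[ℝ] E) v)‖ ≤
      ‖(↑(Q j * (Q k)⁻¹) : E →L[ℝ] E)‖ * ‖v‖ := by
    rw [← mul_apply_eq_comp, ← Units.val_mul]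
    exact ContinuousLinearMap.le_opNorm _ v
  have hQk_le : ‖(Q k : E →L[ℝ] E)‖ ≤
      ‖(↑(Q k * (Q j)⁻¹) : E →L[ℝ] E)‖ * ‖(Q j : E →L[ℝ] E)‖ := by
    calc ‖(Q k : E →L[ℝ] E)‖ = ‖(↑(Q k * (Q j)⁻¹ * Q j) : E →L[ℝ] E)‖ := by
          rw [inv_mul_cancel_right]
      _ ≤ _ := by rw [Units.val_mul]; exact norm_mul_le _ _
  have hcancel : Real.exp (-(a * |(k : ℝ) - j|)) * Real.exp (a * |(k : ℝ) - j|) = 1 := by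
    rw [← Real.exp_add, neg_add_cancel, Real.exp_zero]
  have hweight := orbitWeight_nonneg Q (a := a) k j
  rw [le_div_iff₀ hQk]
  calc orbitWeight Q a k j * ‖(Q j : E →L[ℝ] E) ((↑(Q k)⁻¹ : E →L[ℝ] E) v)‖ *
        ‖(Q k : E →L[ℝ] E)‖
      ≤ orbitWeight Q a k j * (‖(↑(Q j * (Q k)⁻¹) : E →L[ℝ] E)‖ * ‖v‖) *
        (‖(↑(Q k * (Q j)⁻¹) : E →L[ℝ] E)‖ * ‖(Q j : E →L[ℝ] E)‖) := by
        gcongr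
    _ = Real.exp (-(a * |(k : ℝ) - j|)) * (‖(↑(Q k * (Q j)⁻¹) : E →L[ℝ] E)‖ *
        ‖(↑(Q j * (Q k)⁻¹) : E →L[ℝ] E)‖) * ‖v‖ := by
        rw [orbitWeight]; field_simp
    _ ≤ Real.exp (-(a * |(k : ℝ) - j|)) * (D * Real.exp (a * |(k : ℝ) - j|)) * ‖v‖ :=
        mul_le_mul_of_nonneg_right (mul_le_mul_of_nonneg_left (hD j) (Real.exp_pos _).le)
          (norm_nonneg v)
    _ = D * ‖v‖ := by linear_combination D * ‖v‖ * hcancel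

theorem norm_mul_adaptedNorm_apply_le (ha : 0 ≤ a) {k l : ℕ} {T : (E →L[ℝ] E)ˣ}
    (hT : Q l = T * Q k) (v : E) :
    ‖(Q k : E →L[ℝ] E)‖ * adaptedNorm Q a l ((T : E →L[ℝ] E) v) ≤
      Real.exp (a * |(l : ℝ) - k|) * ‖(Q l : E →L[ℝ] E)‖ * adaptedNorm Q a k v := by
  have horbit : (↑(Q l)⁻¹ : E →L[ℝ] E) ((T : E →L[ℝ] E) v) = (↑(Q k)⁻¹ : E →L[ℝ] E) v := by
    rw [← mul_apply_eq_comp, ← Units.val_mul, hT, mul_inv_rev, inv_mul_cancel_right]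
  rw [adaptedNorm_apply, adaptedNorm_apply, horbit]
  have := weightedOrbitSup_le_exp_mul Q ha k l ((↑(Q k)⁻¹ : E →L[ℝ] E) v)
  calc ‖(Q k : E →L[ℝ] E)‖ * (‖(Q l : E →L[ℝ] E)‖ *
        weightedOrbitSup Q a l ((↑(Q k)⁻¹ : E →L[ℝ] E) v))
      ≤ ‖(Q k : E →L[ℝ] E)‖ * (‖(Q l : E →L[ℝ] E)‖ * (Real.exp (a * |(l : ℝ) - k|) *
        weightedOrbitSup Q a k ((↑(Q k)⁻¹ : E →L[ℝ] E) v))) := by gcongr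
    _ = _ := by ring

theorem adaptedNorm_distortion_le (ha : 0 ≤ a) {k l : ℕ} {T : (E →L[ℝ] E)ˣ}
    (hT : Q l = T * Q k) {v w : E} (hv : v ≠ 0) (hw : w ≠ 0) :
    adaptedNorm Q a l ((T : E →L[ℝ] E) v) / adaptedNorm Q a k v *
        (adaptedNorm Q a k ((↑T⁻¹ : E →L[ℝ] E) w) / adaptedNorm Q a l w) ≤
      Real.exp (2 * a * |(l : ℝ) - k|) := by
  have : Nontrivial E := ⟨⟨v, 0, hv⟩⟩
  have hforward := norm_mul_adaptedNorm_apply_le Q ha hT v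
  have hTinv : Q k = T⁻¹ * Q l := by rw [hT, inv_mul_cancel_left]
  have hbackward := norm_mul_adaptedNorm_apply_le Q ha hTinv w
  rw [abs_sub_comm] at hbackward
  have hNv := (norm_pos_iff.mpr hv).trans_le (norm_le_adaptedNorm Q ha k v)
  have hNw := (norm_pos_iff.mpr hw).trans_le (norm_le_adaptedNorm Q ha l w)
  have hQ := mul_pos (Units.norm_pos (Q k)) (Units.norm_pos (Q l))
  rw [div_mul_div_comm, div_le_iff₀ (by positivity), ← mul_le_mul_iff_right₀ hQ]
  calc ‖(Q k : E →L[ℝ] E)‖ * ‖(Q l : E →L[ℝ] E)‖ *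
        (adaptedNorm Q a l ((T : E →L[ℝ] E) v) * adaptedNorm Q a k ((↑T⁻¹ : E →L[ℝ] E) w))
      = (‖(Q k : E →L[ℝ] E)‖ * adaptedNorm Q a l ((T : E →L[ℝ] E) v)) *
          (‖(Q l : E →L[ℝ] E)‖ * adaptedNorm Q a k ((↑T⁻¹ : E →L[ℝ] E) w)) := by ring
    _ ≤ (Real.exp (a * |(l : ℝ) - k|) * ‖(Q l : E →L[ℝ] E)‖ * adaptedNorm Q a k v) *
          (Real.exp (a * |(l : ℝ) - k|) * ‖(Q k : E →L[ℝ] E)‖ * adaptedNorm Q a l w) := by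
        gcongr
    _ = ‖(Q k : E →L[ℝ] E)‖ * ‖(Q l : E →L[ℝ] E)‖ *
          (Real.exp (2 * a * |(l : ℝ) - k|) * (adaptedNorm Q a k v * adaptedNorm Q a l w)) := by
        rw [show 2 * a * |(l : ℝ) - k| = a * |(l : ℝ) - k| + a * |(l : ℝ) - k| by ring,
          Real.exp_add]
        ring

end AdaptedNorm

theorem FiberBunchedWith.exists_norm_untwistedCocycle_mul_inv_mul_le {M : Type*} [MetricSpace M]
    {d : ℕ} {f : Equiv.Perm M} {α : MulAut (GL (Fin d) ℝ)} {A : M → GL (Fin d) ℝ} {ρ θ : ℝ}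
    (hFB : FiberBunchedWith f α A ρ θ) (hρ : 0 ≤ ρ) (x : M) :
    ∃ K > 0, ∀ j k : ℕ,
      ‖((untwistedCocycle f α A x k * (untwistedCocycle f α A x j)⁻¹ : GL (Fin d) ℝ) :
          Matrix (Fin d) (Fin d) ℝ)‖ *
        ‖((untwistedCocycle f α A x j * (untwistedCocycle f α A x k)⁻¹ : GL (Fin d) ℝ) :
          Matrix (Fin d) (Fin d) ℝ)‖ ≤
        K * Real.exp (2 * ρ * k + θ * |(k : ℝ) - j|) := by
  obtain ⟨K, hK, hbunch, -, hα⟩ := hFB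
  refine ⟨K ^ 3, by positivity,
    norm_untwistedCocycle_mul_inv_mul_le f α A hK.le hρ (fun m y => ?_) (fun j T => ?_) x⟩
  · simpa [untwistedCocycle, twc] using (hbunch m y).le
  · simpa using hα (-(j : ℤ)) T

theorem adapted_operator_norms_general {M : Type*} [MetricSpace M] {d : ℕ}
    (f : M ≃ₜ M) (A : M → GL (Fin d) ℝ) (α : MulAut (GL (Fin d) ℝ))
    (ρ θ δ : ℝ) (hρ : 0 < ρ) (hθ : 0 < θ) (hδ : 0 < δ)
    (hFB : FiberBunchedWith f.toEquiv α A ρ θ) (x : M) :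
    ∃ (N : ℕ → Seminorm ℝ (EuclideanSpace ℝ (Fin d))) (C' : ℝ), 0 < C' ∧
      (∀ (k : ℕ) (v : EuclideanSpace ℝ (Fin d)),
        ‖v‖ ≤ N k v ∧ N k v ≤ C' * Real.exp (2 * ρ * k) * ‖v‖) ∧
      (∀ (k : ℕ) (v w : EuclideanSpace ℝ (Fin d)), v ≠ 0 → w ≠ 0 →
        (N (k + 1) (Matrix.toEuclideanLin
              ((((α ^ (-(k + 1 : ℤ))) (A ((f.toEquiv ^ (k : ℤ)) x))) :
                Matrix (Fin d) (Fin d) ℝ)) v) / N k v) *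
          (N k (Matrix.toEuclideanLin
              (((((α ^ (-(k + 1 : ℤ))) (A ((f.toEquiv ^ (k : ℤ)) x)))⁻¹ :
                GL (Fin d) ℝ) : Matrix (Fin d) (Fin d) ℝ)) w) / N (k + 1) w) ≤
          Real.exp (2 * θ + δ)) := by
  obtain ⟨K, hK, hdistortion⟩ := hFB.exists_norm_untwistedCocycle_mul_inv_mul_le hρ.le x
  let φ : GL (Fin d) ℝ →* (EuclideanSpace ℝ (Fin d) →L[ℝ] EuclideanSpace ℝ (Fin d))ˣ :=
    Units.map (Matrix.toEuclideanCLM (n := Fin d) (𝕜 := ℝ)).toRingEquiv.toMonoidHom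
  let Q k := φ (untwistedCocycle f.toEquiv α A x k)
  -- the L2 operator norm of a matrix is defined as the norm of its `toEuclideanCLM`
  have hnorm : ∀ X : GL (Fin d) ℝ, ‖(φ X).val‖ = ‖X.val‖ := fun _ => rfl
  have ha : 0 ≤ θ + δ / 2 := by positivity
  refine ⟨adaptedNorm Q (θ + δ / 2), K, hK,
    fun k v => ⟨norm_le_adaptedNorm Q ha k v, adaptedNorm_le Q ha (fun j => ?_) v⟩,
    fun k v w hv hw => ?_⟩
  · simp only [Q, ← map_inv, ← map_mul, hnorm]
    rw [mul_assoc, ← Real.exp_add]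
    refine (hdistortion j k).trans ?_
    gcongr
    linarith
  · have hT : Q (k + 1) = φ ((α ^ (-(k + 1 : ℤ))) (A ((f.toEquiv ^ k) x))) * Q k := by
      simp only [Q, untwistedCocycle_succ, map_mul]
    have hstep : 2 * (θ + δ / 2) * |((k + 1 : ℕ) : ℝ) - k| = 2 * θ + δ := by
      push_cast; rw [add_sub_cancel_left, abs_one]; ring
    rw [zpow_natCast, ← hstep]
    exact adaptedNorm_distortion_le Q ha hT hv hw

/-- **Corollary (adapted operator norms).** There is a family of norms `‖·‖_k` on `ℝ^d`,
comparable with the Euclidean norm as `‖v‖ ≤ ‖v‖_k ≤ C e^{2ρk}‖v‖`, such that for every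
`k ≥ 1` the matrix `T_k = α^{-k}(A(f^{k-1}(x)))` satisfies
`‖T_k‖_k · ‖T_k⁻¹‖_k ≤ e^{2θ+δ}`, where the operator norms are taken from `‖·‖_{k-1}` to
`‖·‖_k` and back (stated pointwise on nonzero vectors). -/
theorem adapted_operator_norms {M : Type*} [MetricSpace M] [CompactSpace M] {d : ℕ}
    (f : M ≃ₜ M) (C ε lam τ ν : ℝ) (hν : 0 < ν)
    (hf : IsHyperbolicLPS f C ε lam τ)
    (A : M → GL (Fin d) ℝ) (α : MulAut (GL (Fin d) ℝ))
    (hA : IsHolder ν A) (ρ θ δ : ℝ) (hρ : 0 < ρ) (hθ : 0 < θ) (hδ : 0 < δ)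
    (hFB : FiberBunchedWith f.toEquiv α A ρ θ)
    (hlt : 5 * ρ + 2 * θ + δ < lam * ν) (x : M) :
    ∃ (N : ℕ → Seminorm ℝ (EuclideanSpace ℝ (Fin d))) (C' : ℝ), 0 < C' ∧
      (∀ (k : ℕ) (v : EuclideanSpace ℝ (Fin d)),
        ‖v‖ ≤ N k v ∧ N k v ≤ C' * Real.exp (2 * ρ * k) * ‖v‖) ∧
      (∀ (k : ℕ) (v w : EuclideanSpace ℝ (Fin d)), v ≠ 0 → w ≠ 0 →
        (N (k + 1) (Matrix.toEuclideanLin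
              ((((α ^ (-(k + 1 : ℤ))) (A ((f.toEquiv ^ (k : ℤ)) x))) :
                Matrix (Fin d) (Fin d) ℝ)) v) / N k v) *
          (N k (Matrix.toEuclideanLin
              (((((α ^ (-(k + 1 : ℤ))) (A ((f.toEquiv ^ (k : ℤ)) x)))⁻¹ :
                GL (Fin d) ℝ) : Matrix (Fin d) (Fin d) ℝ)) w) / N (k + 1) w) ≤
          Real.exp (2 * θ + δ)) :=
  adapted_operator_norms_general f A α ρ θ δ hρ hθ hδ hFB x
end
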